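/- The optimal solution to the grouped polyhedral description problem incurs true cost at most |G_max| times the optimal true cost: COST(P*_G) ≤ |G_max| · COST(P*), for any grouping scheme with maximum group size |G_max|. -/
import Mathlib


open Finset

attribute [local instance] Classical.propDecidable

def incorrect {ι : Type*} {m K : ℕ} (x : ι → Fin m → ℝ) (c : ι → Fin K)
    (P : Fin K → Set (Fin m → ℝ)) (i : ι) : Prop :=
  x i ∉ P (c i) ∨ ∃ k', k' ≠ c i ∧ x i ∈ P k'

noncomputable def cost {ι : Type*} [Fintype ι] {m K : ℕ} (x : ι → Fin m → ℝ)
    (c : ι → Fin K) (P : Fin K → Set (Fin m → ℝ)) : ℕ :=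
  (univ.filter fun i => incorrect x c P i).card

noncomputable def costG {ι : Type*} [Fintype ι] {γ : Type*} [Fintype γ] {m K : ℕ}
    (x : ι → Fin m → ℝ) (c : ι → Fin K) (g : ι → γ)
    (P : Fin K → Set (Fin m → ℝ)) : ℕ :=
  ∑ G : γ, (univ.filter fun i => g i = G).card *
      (if ∃ i, g i = G ∧ incorrect x c P i then 1 else 0)

lemma cost_fiberwise {ι : Type*} [Fintype ι] {γ : Type*} [Fintype γ] {m K : ℕ}
    (x : ι → Fin m → ℝ) (c : ι → Fin K) (g : ι → γ)
    (P : Fin K → Set (Fin m → ℝ)) :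
    cost x c P = ∑ G : γ, ((univ.filter fun i => g i = G ∧ incorrect x c P i).card) := by
  classical
  rw [cost, Finset.card_eq_sum_card_fiberwise (f := g) (t := univ) (fun i _ => mem_univ _)]
  refine Finset.sum_congr rfl fun G _ => ?_
  congr 1
  ext i
  simp [Finset.mem_filter, and_comm]

lemma cost_le_costG {ι : Type*} [Fintype ι] {γ : Type*} [Fintype γ] {m K : ℕ}
    (x : ι → Fin m → ℝ) (c : ι → Fin K) (g : ι → γ)
    (P : Fin K → Set (Fin m → ℝ)) :
    cost x c P ≤ costG x c g P := by
  classical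
  rw [cost_fiberwise x c g P, costG]
  refine Finset.sum_le_sum fun G _ => ?_
  by_cases h : ∃ i, g i = G ∧ incorrect x c P i
  · simp only [h, if_true, mul_one]
    exact Finset.card_le_card (by intro i hi; simp_all [Finset.mem_filter])
  · simp only [h, if_false, mul_zero]
    have : (univ.filter fun i => g i = G ∧ incorrect x c P i) = ∅ := by
      ext i; simp only [Finset.mem_filter, mem_univ, true_and, Finset.notMem_empty, iff_false]
      intro hi; exact h ⟨i, hi⟩
    simp [this]

lemma costG_le {ι : Type*} [Fintype ι] {γ : Type*} [Fintype γ] {m K : ℕ}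
    (x : ι → Fin m → ℝ) (c : ι → Fin K) (g : ι → γ)
    (Gmax : ℕ) (hGmax : ∀ G : γ, (univ.filter fun i => g i = G).card ≤ Gmax)
    (P : Fin K → Set (Fin m → ℝ)) :
    costG x c g P ≤ Gmax * cost x c P := by
  classical
  rw [cost_fiberwise x c g P, costG, Finset.mul_sum]
  refine Finset.sum_le_sum fun G _ => ?_
  by_cases h : ∃ i, g i = G ∧ incorrect x c P i
  · simp only [h, if_true, mul_one]
    obtain ⟨i, hi⟩ := h
    have h1 : 1 ≤ (univ.filter fun i => g i = G ∧ incorrect x c P i).card :=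
      Finset.card_pos.mpr ⟨i, by simp [Finset.mem_filter, hi]⟩
    calc (univ.filter fun i => g i = G).card ≤ Gmax := hGmax G
      _ = Gmax * 1 := (mul_one _).symm
      _ ≤ _ := Nat.mul_le_mul_left _ h1
  · simp [h]

/-- Theorem 2 of the paper: the optimal solution of the grouped problem
incurs true cost at most `Gmax` times the optimal true cost. -/
theorem grouped_optimum_approx {ι : Type*} [Fintype ι] {γ : Type*} [Fintype γ]
    {m K : ℕ} (x : ι → Fin m → ℝ) (c : ι → Fin K) (g : ι → γ)
    (hg : ∀ i j, g i = g j → c i = c j)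
    (Gmax : ℕ) (hGmax : ∀ G : γ, (univ.filter fun i => g i = G).card ≤ Gmax)
    (𝒞 : Set (Fin K → Set (Fin m → ℝ)))
    (PG Pstar : Fin K → Set (Fin m → ℝ)) (hPG : PG ∈ 𝒞) (hPstar : Pstar ∈ 𝒞)
    (hminG : ∀ P ∈ 𝒞, costG x c g PG ≤ costG x c g P)
    (hmin : ∀ P ∈ 𝒞, cost x c Pstar ≤ cost x c P) :
    cost x c PG ≤ Gmax * cost x c Pstar :=
  calc cost x c PG ≤ costG x c g PG := cost_le_costG x c g PG
    _ ≤ costG x c g Pstar := hminG Pstar hPstar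
    _ ≤ Gmax * cost x c Pstar := costG_le x c g Gmax hGmax Pstar
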